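/- For three jointly distributed discrete random variables X1, X2, X3, the dual total correlation satisfies the sandwich bound (1/3)[I(X1,X2;X3) + I(X2,X3;X1) + I(X1,X3;X2)] ≤ DTC(X1,X2,X3) ≤ (2/3)[I(X1,X2;X3) + I(X2,X3;X1) + I(X1,X3;X2)]. -/

import Mathlib

open BigOperators

/-- A probability distribution on a finite sample space. -/
structure FinProb (Ω : Type*) [Fintype Ω] where
  p : Ω → ℝ
  nonneg : ∀ ω, 0 ≤ p ω
  sum_one : ∑ ω, p ω = 1

/-- Probability that the discrete random variable `X` takes the value `s`. -/
noncomputable def probOf {Ω S : Type*} [Fintype Ω] [DecidableEq S]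
    (μ : FinProb Ω) (X : Ω → S) (s : S) : ℝ :=
  ∑ ω, if X ω = s then μ.p ω else 0

/-- Shannon entropy of a discrete random variable. -/
noncomputable def entropy {Ω S : Type*} [Fintype Ω] [Fintype S] [DecidableEq S]
    (μ : FinProb Ω) (X : Ω → S) : ℝ :=
  -∑ s, probOf μ X s * Real.log (probOf μ X s)

/-- Conditional entropy `H(X | Y) = H(X,Y) - H(Y)`. -/
noncomputable def condEntropy {Ω S T : Type*} [Fintype Ω] [Fintype S] [Fintype T]
    [DecidableEq S] [DecidableEq T] (μ : FinProb Ω) (X : Ω → S) (Y : Ω → T) : ℝ :=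
  entropy μ (fun ω => (X ω, Y ω)) - entropy μ Y

/-- Mutual information `I(X;Y) = H(X) + H(Y) - H(X,Y)`. -/
noncomputable def mutualInfo {Ω S T : Type*} [Fintype Ω] [Fintype S] [Fintype T]
    [DecidableEq S] [DecidableEq T] (μ : FinProb Ω) (X : Ω → S) (Y : Ω → T) : ℝ :=
  entropy μ X + entropy μ Y - entropy μ (fun ω => (X ω, Y ω))

/-- Conditional mutual information `I(X;Y|Z) = H(X,Z) + H(Y,Z) - H(X,Y,Z) - H(Z)`. -/
noncomputable def condMutualInfo {Ω S T U : Type*} [Fintype Ω] [Fintype S] [Fintype T]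
    [Fintype U] [DecidableEq S] [DecidableEq T] [DecidableEq U]
    (μ : FinProb Ω) (X : Ω → S) (Y : Ω → T) (Z : Ω → U) : ℝ :=
  entropy μ (fun ω => (X ω, Z ω)) + entropy μ (fun ω => (Y ω, Z ω))
    - entropy μ (fun ω => (X ω, Y ω, Z ω)) - entropy μ Z

/-- Dual total correlation of three discrete random variables:
`DTC(X1,X2,X3) = H(X1,X2,X3) - H(X1|X2,X3) - H(X2|X1,X3) - H(X3|X1,X2)`. -/
noncomputable def DTC3 {Ω S1 S2 S3 : Type*} [Fintype Ω] [Fintype S1] [Fintype S2] [Fintype S3]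
    [DecidableEq S1] [DecidableEq S2] [DecidableEq S3]
    (μ : FinProb Ω) (X1 : Ω → S1) (X2 : Ω → S2) (X3 : Ω → S3) : ℝ :=
  entropy μ (fun ω => (X1 ω, X2 ω, X3 ω))
    - condEntropy μ X1 (fun ω => (X2 ω, X3 ω))
    - condEntropy μ X2 (fun ω => (X1 ω, X3 ω))
    - condEntropy μ X3 (fun ω => (X1 ω, X2 ω))

/-! Both bounds come from two linear identities between entropies,
`3 DTC = Σ I(Xi,Xj;Xk) + Σ I(Xi;Xj|Xk)` and `2 Σ I(Xi,Xj;Xk) = 3 DTC + Σ I(Xi;Xj)`,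
together with the nonnegativity of (conditional) mutual information. Nonnegativity of `I(X;Y|Z)`,
i.e. submodularity of entropy, is Gibbs' inequality between the law `p(x,y,z)` of `(X,Y,Z)` and
`p(x,z) p(y,z) / p(z)`; nonnegativity of `I(X;Y)` is the case of a constant `Z`. -/

open Real

lemma sum_mul_log_le_sum_mul_log {A : Type*} [Fintype A] {p q : A → ℝ} (hp : ∀ a, 0 ≤ p a)
    (hq : ∀ a, 0 ≤ q a) (hpq : ∀ a, 0 < p a → 0 < q a) (hsum : ∑ a, q a ≤ ∑ a, p a) :
    ∑ a, p a * log (q a) ≤ ∑ a, p a * log (p a) := by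
  have hterm : ∀ a, p a * log (q a) - p a * log (p a) ≤ q a - p a := by
    intro a
    rcases (hp a).eq_or_lt with h | h
    · simp [← h, hq a]
    have hlog := log_le_sub_one_of_pos (div_pos (hpq a h) h)
    rw [log_div (hpq a h).ne' h.ne'] at hlog
    calc p a * log (q a) - p a * log (p a) = p a * (log (q a) - log (p a)) := by ring
      _ ≤ p a * (q a / p a - 1) := mul_le_mul_of_nonneg_left hlog h.le
      _ = q a - p a := by field_simp
  have hsum' := Finset.sum_le_sum fun a (_ : a ∈ Finset.univ) => hterm a
  simp only [Finset.sum_sub_distrib] at hsum'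
  linarith

section Entropy

variable {Ω : Type*} [Fintype Ω] (μ : FinProb Ω)
variable {S T U : Type*} [DecidableEq S] [DecidableEq T] [DecidableEq U]

lemma probOf_nonneg (X : Ω → S) (s : S) : 0 ≤ probOf μ X s :=
  Finset.sum_nonneg fun ω _ => by split_ifs <;> simp [μ.nonneg ω]

lemma sum_mul_comp_eq_sum_probOf_mul [Fintype S] (X : Ω → S) (g : S → ℝ) :
    ∑ ω, μ.p ω * g (X ω) = ∑ s, probOf μ X s * g s := by
  simp only [probOf, Finset.sum_mul, ite_mul, zero_mul]
  rw [Finset.sum_comm]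
  simp

lemma sum_probOf [Fintype S] (X : Ω → S) : ∑ s, probOf μ X s = 1 := by
  simpa [μ.sum_one] using (sum_mul_comp_eq_sum_probOf_mul μ X fun _ => 1).symm

lemma sum_probOf_prod_fst [Fintype S] (X : Ω → S) (Y : Ω → T) (t : T) :
    ∑ s, probOf μ (fun ω => (X ω, Y ω)) (s, t) = probOf μ Y t := by
  simp only [probOf, Prod.mk.injEq, ite_and]
  rw [Finset.sum_comm]
  simp

lemma probOf_le_probOf_comp (f : S → T) (X : Ω → S) (s : S) :
    probOf μ X s ≤ probOf μ (fun ω => f (X ω)) (f s) :=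
  Finset.sum_le_sum fun ω _ => by
    by_cases h : X ω = s
    · simp [h]
    · split_ifs <;> simp [μ.nonneg ω]

lemma entropy_comp [Fintype S] [Fintype T] (f : S → T) (X : Ω → S) :
    entropy μ (fun ω => f (X ω)) =
      -∑ s, probOf μ X s * log (probOf μ (fun ω => f (X ω)) (f s)) := by
  rw [entropy, ← sum_mul_comp_eq_sum_probOf_mul μ (fun ω => f (X ω)),
    ← sum_mul_comp_eq_sum_probOf_mul μ X (fun s => log (probOf μ (fun ω => f (X ω)) (f s)))]

lemma entropy_comp_of_injective [Fintype S] [Fintype T] (f : S → T) (hf : f.Injective)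
    (X : Ω → S) : entropy μ (fun ω => f (X ω)) = entropy μ X := by
  rw [entropy_comp, entropy]
  simp only [probOf, hf.eq_iff]

lemma entropy_const_unit : entropy μ (fun _ => ()) = 0 := by
  simp [entropy, probOf, μ.sum_one]

lemma sum_probOf_mul_probOf_div_probOf [Fintype S] [Fintype T] [Fintype U]
    (X : Ω → S) (Y : Ω → T) (Z : Ω → U) :
    ∑ v : S × T × U, probOf μ (fun ω => (X ω, Z ω)) (v.1, v.2.2) *
      probOf μ (fun ω => (Y ω, Z ω)) (v.2.1, v.2.2) / probOf μ Z v.2.2 = 1 := by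
  simp only [Fintype.sum_prod_type]
  rw [Finset.sum_comm]
  refine (Finset.sum_congr rfl fun y _ => Finset.sum_comm).trans ?_
  rw [Finset.sum_comm]
  simp_rw [← Finset.sum_div, ← Finset.sum_mul, sum_probOf_prod_fst, ← Finset.mul_sum,
    sum_probOf_prod_fst, mul_self_div_self]
  exact sum_probOf μ Z

theorem condMutualInfo_nonneg [Fintype S] [Fintype T] [Fintype U]
    (X : Ω → S) (Y : Ω → T) (Z : Ω → U) : 0 ≤ condMutualInfo μ X Y Z := by
  set V : Ω → S × T × U := fun ω => (X ω, Y ω, Z ω)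
  set P := probOf μ V
  set pXZ := probOf μ (fun ω => (X ω, Z ω))
  set pYZ := probOf μ (fun ω => (Y ω, Z ω))
  set pZ := probOf μ Z
  set Q : S × T × U → ℝ := fun v => pXZ (v.1, v.2.2) * pYZ (v.2.1, v.2.2) / pZ v.2.2
  have hXZ : entropy μ (fun ω => (X ω, Z ω)) = -∑ v, P v * log (pXZ (v.1, v.2.2)) :=
    entropy_comp μ (fun v : S × T × U => (v.1, v.2.2)) V
  have hYZ : entropy μ (fun ω => (Y ω, Z ω)) = -∑ v, P v * log (pYZ (v.2.1, v.2.2)) :=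
    entropy_comp μ (fun v : S × T × U => (v.2.1, v.2.2)) V
  have hZ : entropy μ Z = -∑ v, P v * log (pZ v.2.2) :=
    entropy_comp μ (fun v : S × T × U => v.2.2) V
  have hpos : ∀ v, 0 < P v → 0 < pXZ (v.1, v.2.2) ∧ 0 < pYZ (v.2.1, v.2.2) ∧ 0 < pZ v.2.2 :=
    fun v hv => ⟨hv.trans_le (probOf_le_probOf_comp μ (fun v => (v.1, v.2.2)) V v),
      hv.trans_le (probOf_le_probOf_comp μ (fun v => (v.2.1, v.2.2)) V v),
      hv.trans_le (probOf_le_probOf_comp μ (fun v => v.2.2) V v)⟩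
  have hlogQ : ∀ v, P v * log (Q v) =
      P v * log (pXZ (v.1, v.2.2)) + P v * log (pYZ (v.2.1, v.2.2)) - P v * log (pZ v.2.2) := by
    intro v
    rcases (probOf_nonneg μ V v).eq_or_lt with hv | hv
    · simp [P, ← hv]
    obtain ⟨h1, h2, h3⟩ := hpos v hv
    rw [log_div (mul_pos h1 h2).ne' h3.ne', log_mul h1.ne' h2.ne']
    ring
  have gibbs : ∑ v, P v * log (Q v) ≤ ∑ v, P v * log (P v) := by
    refine sum_mul_log_le_sum_mul_log (probOf_nonneg μ V) (fun v => ?_) (fun v hv => ?_) ?_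
    · exact div_nonneg (mul_nonneg (probOf_nonneg μ _ _) (probOf_nonneg μ _ _))
        (probOf_nonneg μ _ _)
    · obtain ⟨h1, h2, h3⟩ := hpos v hv
      exact div_pos (mul_pos h1 h2) h3
    · rw [sum_probOf_mul_probOf_div_probOf, sum_probOf]
  simp only [hlogQ, Finset.sum_add_distrib, Finset.sum_sub_distrib] at gibbs
  rw [condMutualInfo, hXZ, hYZ, hZ, entropy]
  linarith

theorem condMutualInfo_const_unit [Fintype S] [Fintype T] (X : Ω → S) (Y : Ω → T) :
    condMutualInfo μ X Y (fun _ => ()) = mutualInfo μ X Y := by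
  have hX : entropy μ (fun ω => (X ω, ())) = entropy μ X :=
    entropy_comp_of_injective μ (fun x => (x, ())) (fun _ _ h => congrArg Prod.fst h) X
  have hY : entropy μ (fun ω => (Y ω, ())) = entropy μ Y :=
    entropy_comp_of_injective μ (fun y => (y, ())) (fun _ _ h => congrArg Prod.fst h) Y
  have hXY : entropy μ (fun ω => (X ω, Y ω, ())) = entropy μ (fun ω => (X ω, Y ω)) :=
    entropy_comp_of_injective μ (fun p : S × T => (p.1, p.2, ()))
      (fun _ _ h => by simp_all [Prod.ext_iff]) fun ω => (X ω, Y ω)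
  rw [condMutualInfo, mutualInfo, hX, hY, hXY, entropy_const_unit]
  ring

theorem mutualInfo_nonneg [Fintype S] [Fintype T] (X : Ω → S) (Y : Ω → T) :
    0 ≤ mutualInfo μ X Y :=
  condMutualInfo_const_unit μ X Y ▸ condMutualInfo_nonneg μ X Y _

lemma entropy_prod_comm [Fintype S] [Fintype T] (X : Ω → S) (Y : Ω → T) :
    entropy μ (fun ω => (Y ω, X ω)) = entropy μ (fun ω => (X ω, Y ω)) :=
  entropy_comp_of_injective μ Prod.swap Prod.swap_injective fun ω => (X ω, Y ω)

lemma entropy_prod_assoc [Fintype S] [Fintype T] [Fintype U]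
    (X : Ω → S) (Y : Ω → T) (Z : Ω → U) :
    entropy μ (fun ω => ((X ω, Y ω), Z ω)) = entropy μ (fun ω => (X ω, Y ω, Z ω)) :=
  entropy_comp_of_injective μ _ (Equiv.prodAssoc S T U).symm.injective fun ω => (X ω, Y ω, Z ω)

lemma entropy_prod_left_comm [Fintype S] [Fintype T] [Fintype U]
    (X : Ω → S) (Y : Ω → T) (Z : Ω → U) :
    entropy μ (fun ω => (Y ω, X ω, Z ω)) = entropy μ (fun ω => (X ω, Y ω, Z ω)) :=
  entropy_comp_of_injective μ (fun v : S × T × U => (v.2.1, v.1, v.2.2))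
    (fun _ _ h => by simp_all [Prod.ext_iff]) fun ω => (X ω, Y ω, Z ω)

lemma entropy_prod_right_comm [Fintype S] [Fintype T] [Fintype U]
    (X : Ω → S) (Y : Ω → T) (Z : Ω → U) :
    entropy μ (fun ω => (X ω, Z ω, Y ω)) = entropy μ (fun ω => (X ω, Y ω, Z ω)) :=
  entropy_comp_of_injective μ _ (Function.injective_id.prodMap Prod.swap_injective)
    fun ω => (X ω, Y ω, Z ω)

end Entropy

section ThreeVariables

variable {Ω : Type*} [Fintype Ω] (μ : FinProb Ω)
variable {S1 S2 S3 : Type*} [Fintype S1] [Fintype S2] [Fintype S3]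
  [DecidableEq S1] [DecidableEq S2] [DecidableEq S3] (X1 : Ω → S1) (X2 : Ω → S2) (X3 : Ω → S3)

theorem three_mul_DTC3_eq :
    3 * DTC3 μ X1 X2 X3 =
      (mutualInfo μ (fun ω => (X1 ω, X2 ω)) X3 + mutualInfo μ (fun ω => (X2 ω, X3 ω)) X1
        + mutualInfo μ (fun ω => (X1 ω, X3 ω)) X2)
      + (condMutualInfo μ X1 X2 X3 + condMutualInfo μ X2 X3 X1 + condMutualInfo μ X1 X3 X2) := by
  simp only [DTC3, condEntropy, mutualInfo, condMutualInfo, entropy_prod_assoc,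
    entropy_prod_left_comm μ X1 X3 X2, entropy_prod_right_comm μ X2 X1 X3,
    entropy_prod_right_comm μ X1 X2 X3, entropy_prod_left_comm μ X1 X2 X3,
    entropy_prod_comm μ X1 X2, entropy_prod_comm μ X1 X3, entropy_prod_comm μ X2 X3]
  ring

theorem two_mul_sum_mutualInfo_eq :
    2 * (mutualInfo μ (fun ω => (X1 ω, X2 ω)) X3 + mutualInfo μ (fun ω => (X2 ω, X3 ω)) X1
        + mutualInfo μ (fun ω => (X1 ω, X3 ω)) X2) =
      3 * DTC3 μ X1 X2 X3 + (mutualInfo μ X1 X2 + mutualInfo μ X1 X3 + mutualInfo μ X2 X3) := by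
  simp only [DTC3, condEntropy, mutualInfo, entropy_prod_assoc,
    entropy_prod_left_comm μ X1 X3 X2, entropy_prod_right_comm μ X2 X1 X3,
    entropy_prod_right_comm μ X1 X2 X3, entropy_prod_left_comm μ X1 X2 X3]
  ring

end ThreeVariables

theorem dtc_three_sandwich {Ω S1 S2 S3 : Type*} [Fintype Ω]
    [Fintype S1] [Fintype S2] [Fintype S3]
    [DecidableEq S1] [DecidableEq S2] [DecidableEq S3]
    (μ : FinProb Ω) (X1 : Ω → S1) (X2 : Ω → S2) (X3 : Ω → S3) :
    (1/3) * (mutualInfo μ (fun ω => (X1 ω, X2 ω)) X3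
              + mutualInfo μ (fun ω => (X2 ω, X3 ω)) X1
              + mutualInfo μ (fun ω => (X1 ω, X3 ω)) X2)
      ≤ DTC3 μ X1 X2 X3 ∧
    DTC3 μ X1 X2 X3
      ≤ (2/3) * (mutualInfo μ (fun ω => (X1 ω, X2 ω)) X3
                  + mutualInfo μ (fun ω => (X2 ω, X3 ω)) X1
                  + mutualInfo μ (fun ω => (X1 ω, X3 ω)) X2) := by
  have hDTC := three_mul_DTC3_eq μ X1 X2 X3
  have hI := two_mul_sum_mutualInfo_eq μ X1 X2 X3
  constructor
  · linarith [condMutualInfo_nonneg μ X1 X2 X3, condMutualInfo_nonneg μ X2 X3 X1,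
      condMutualInfo_nonneg μ X1 X3 X2]
  · linarith [mutualInfo_nonneg μ X1 X2, mutualInfo_nonneg μ X1 X3, mutualInfo_nonneg μ X2 X3]
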